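/- arXiv:2605.20726 — 3 statements merged into one kernel-verified Lean document; each statement's English description precedes it below -/
import Mathlib

section
/- For any fixed x ∈ [0,1] and β ∈ [0,1], the function f(t) = (x - t) / (t(1-t))^β is monotonically decreasing on (0,1). -/
/-- For fixed `x ∈ [0,1]` and `β ∈ [0,1]`, the function
`f(t) = (x - t) / (t(1-t))^β` is monotonically decreasing on `(0,1)`. -/
theorem stmt_0 (x β : ℝ) (hx : x ∈ Set.Icc (0:ℝ) 1) (hβ : β ∈ Set.Icc (0:ℝ) 1) :
    AntitoneOn (fun t : ℝ => (x - t) / (t * (1 - t)) ^ β) (Set.Ioo (0:ℝ) 1) := by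
  obtain ⟨hx0, hx1⟩ := hx
  obtain ⟨hβ0, hβ1⟩ := hβ
  have key : ∀ t ∈ Set.Ioo (0:ℝ) 1, HasDerivAt (fun t : ℝ => (x - t) / (t * (1 - t)) ^ β)
      (((-1) * (t*(1-t))^β - (x - t) * (β * (t*(1-t))^(β-1) * (1 - 2*t))) /
        ((t*(1-t))^β)^2) t := by
    intro t ht
    have hu : 0 < t * (1 - t) := mul_pos ht.1 (by linarith [ht.2])
    have h1 : HasDerivAt (fun t : ℝ => t * (1 - t)) (1 - 2*t) t := by
      have := (hasDerivAt_id' t).mul ((hasDerivAt_const t (1:ℝ)).sub (hasDerivAt_id' t))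
      exact this.congr_deriv (by simp only [Pi.sub_apply]; ring)
    have h2 : HasDerivAt (fun t : ℝ => (t * (1 - t)) ^ β)
        (β * (t*(1-t))^(β-1) * (1 - 2*t)) t := by
      exact (Real.hasDerivAt_rpow_const (p := β) (Or.inl hu.ne')).comp t h1
    have h3 : HasDerivAt (fun t : ℝ => x - t) (-1) t := by
      simpa using (hasDerivAt_id t).const_sub x
    exact h3.div h2 (by positivity)
  apply antitoneOn_of_deriv_nonpos (convex_Ioo 0 1)
  · intro t ht
    exact (key t ht).continuousAt.continuousWithinAt
  · rw [interior_Ioo]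
    intro t ht
    exact (key t ht).differentiableAt.differentiableWithinAt
  · rw [interior_Ioo]
    intro t ht
    rw [(key t ht).deriv]
    have hu : 0 < t * (1 - t) := mul_pos ht.1 (by linarith [ht.2])
    apply div_nonpos_of_nonpos_of_nonneg _ (by positivity)
    have hfac : (t*(1-t))^β = (t*(1-t))^(β-1) * (t*(1-t)) := by
      rw [← Real.rpow_add_one hu.ne' (β-1)]
      ring_nf
    rw [hfac]
    have hpow : 0 < (t*(1-t))^(β-1) := Real.rpow_pos_of_pos hu _
    have hh : 0 ≤ t*(1-t) + β * ((x - t) * (1 - 2*t)) := by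
      rcases le_or_gt 0 ((x - t) * (1 - 2*t)) with hc | hc
      · nlinarith
      · have : β * ((x - t) * (1 - 2*t)) ≥ (x - t) * (1 - 2*t) := by nlinarith
        have h2 : 0 ≤ t*(1-t) + (x - t) * (1 - 2*t) := by
          nlinarith [mul_nonneg (sub_nonneg.2 hx1) (sq_nonneg t),
            mul_nonneg hx0 (sq_nonneg (1-t))]
        linarith
    nlinarith [mul_nonneg hpow.le hh]
end

section
/- Let R : (0,1) → ℕ and V : (0,1) → ℕ be nondecreasing functions with V(t) ≤ R(t) for all t, and such that for all s ≤ t, V(t) - V(s) ≤ R(t) - R(s). If B : (0,1) → ℝ satisfies V(s) ≤ B(s) for all s, then V(t) ≤ B*(t) for all t, where B*(t) = R(t) - sup_{s ≤ t} max{R(s) - B(s), 0}. -/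
/-- Self-refinement: if `V(s) ≤ B(s)` pointwise, `V, R` nondecreasing with increments of
`V` dominated by increments of `R`, and `V ≤ R`, then
`V(t) ≤ B*(t) = R(t) - sup_{s ≤ t} max{R(s)-B(s), 0}` on `(0,1)`. -/
theorem stmt_4 (R V : ℝ → ℕ) (B : ℝ → ℝ)
    (hR : MonotoneOn (fun t => R t) (Set.Ioo (0:ℝ) 1))
    (hV : MonotoneOn (fun t => V t) (Set.Ioo (0:ℝ) 1))
    (hVR : ∀ t ∈ Set.Ioo (0:ℝ) 1, V t ≤ R t)
    (hincr : ∀ s ∈ Set.Ioo (0:ℝ) 1, ∀ t ∈ Set.Ioo (0:ℝ) 1, s ≤ t →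
      (V t : ℤ) - (V s : ℤ) ≤ (R t : ℤ) - (R s : ℤ))
    (hB : ∀ s ∈ Set.Ioo (0:ℝ) 1, (V s : ℝ) ≤ B s) :
    ∀ t ∈ Set.Ioo (0:ℝ) 1,
      (V t : ℝ) ≤ (R t : ℝ) -
        sSup {y : ℝ | ∃ s ∈ Set.Ioo (0:ℝ) 1, s ≤ t ∧ y = max ((R s : ℝ) - B s) 0} := by
  intro t ht
  have hVRt : (V t : ℝ) ≤ (R t : ℝ) := by exact_mod_cast hVR t ht
  have hsup : sSup {y : ℝ | ∃ s ∈ Set.Ioo (0:ℝ) 1, s ≤ t ∧ y = max ((R s : ℝ) - B s) 0}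
      ≤ (R t : ℝ) - (V t : ℝ) := by
    apply Real.sSup_le
    · rintro x ⟨s, hs, hst, rfl⟩
      have h1 : (V s : ℝ) ≤ B s := hB s hs
      have h2 : (V t : ℤ) - (V s : ℤ) ≤ (R t : ℤ) - (R s : ℤ) := hincr s hs t ht hst
      have h2' : (V t : ℝ) - (V s : ℝ) ≤ (R t : ℝ) - (R s : ℝ) := by exact_mod_cast h2
      apply max_le (by linarith) (by linarith)
    · linarith
  linarith
end

section
/- Let T₁,...,T_n, T' be i.i.d. Uniform[0,1], U ~ Uniform[0,1] independent, and q = (Σ_{i=1}^n 1{T_i < T'} + U)/(n+1). Then q is uniformly distributed on [0,1]. -/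
open MeasureTheory Set


lemma clamp_sum (m : ℕ) (y : ℝ) :
    ∑ k ∈ Finset.range m, min (max (y - k) 0) 1 = min (max y 0) m := by
  induction m with
  | zero => simp
  | succ m ih =>
    rw [Finset.sum_range_succ, ih]
    push_cast
    rcases le_total y 0 with h0 | h0
    · rw [max_eq_right h0]
      rw [max_eq_right (by linarith : y - m ≤ 0)]
      rw [min_eq_left (by positivity : (0:ℝ) ≤ (m:ℝ))]
      rw [min_eq_left (by positivity : (0:ℝ) ≤ (m:ℝ)+1)]
      simp
    · rw [max_eq_left h0]
      rcases le_total y m with h1 | h1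
      · rw [min_eq_left h1, max_eq_right (by linarith : y - m ≤ 0)]
        rw [min_eq_left (by linarith : y ≤ (m:ℝ)+1)]
        simp
      · rw [min_eq_right h1, max_eq_left (by linarith : 0 ≤ y - m)]
        rcases le_total y (m+1) with h2 | h2
        · rw [min_eq_left h2, min_eq_left (by linarith : y - (m:ℝ) ≤ 1)]; ring
        · rw [min_eq_right h2, min_eq_right (by linarith : (1:ℝ) ≤ y - m)]


lemma prod_shift_factorial_nat (k m : ℕ) :
    (∏ j ∈ Finset.range (m + 1), (k + 1 + j)) * k.factorial =
      (k + m + 1).factorial := by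
  induction m with
  | zero => simp [Nat.factorial_succ, Nat.mul_comm]
  | succ m ih =>
    rw [Finset.prod_range_succ, mul_right_comm, ih]
    have : k + (m + 1) + 1 = (k + m + 1) + 1 := by omega
    rw [this]
    conv_rhs => rw [Nat.factorial_succ]
    ring

lemma prod_shift_factorial (k m : ℕ) :
    (∏ j ∈ Finset.range (m + 1), ((k:ℂ) + 1 + j)) * (k.factorial : ℂ) =
      ((k + m + 1).factorial : ℂ) := by
  have := congrArg (Nat.cast (R := ℂ)) (prod_shift_factorial_nat k m)
  push_cast at this
  exact this

lemma beta_real (k m : ℕ) :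
    ∫ t in Icc (0:ℝ) 1, t ^ k * (1 - t) ^ m =
      (k.factorial : ℝ) * m.factorial / (k + m + 1).factorial := by
  have h1 : ∫ t in Icc (0:ℝ) 1, t ^ k * (1 - t) ^ m
      = ∫ t in (0:ℝ)..1, t ^ k * (1 - t) ^ m := by
    rw [intervalIntegral.integral_of_le zero_le_one, integral_Icc_eq_integral_Ioc]
  have hbeta : Complex.betaIntegral ((k:ℂ) + 1) ((m:ℂ) + 1)
      = ((∫ t in (0:ℝ)..1, t ^ k * (1 - t) ^ m : ℝ) : ℂ) := by
    rw [Complex.betaIntegral]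
    rw [← intervalIntegral.integral_ofReal]
    refine intervalIntegral.integral_congr fun x hx => ?_
    rw [add_sub_cancel_right, add_sub_cancel_right, Complex.cpow_natCast,
      Complex.cpow_natCast]
    push_cast
    ring
  have heval := Complex.betaIntegral_eval_nat_add_one_right
    (u := (k:ℂ) + 1) (by simp [Complex.add_re]; positivity) m
  rw [heval] at hbeta
  have hprod := prod_shift_factorial k m
  have hfac : (k.factorial : ℂ) ≠ 0 := by exact_mod_cast Nat.factorial_ne_zero k
  have hprodne : (∏ j ∈ Finset.range (m + 1), ((k:ℂ) + 1 + j)) ≠ 0 := by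
    intro h
    rw [h, zero_mul] at hprod
    exact (Nat.cast_ne_zero.2 (Nat.factorial_ne_zero _)) hprod.symm
  have : ((∫ t in (0:ℝ)..1, t ^ k * (1 - t) ^ m : ℝ) : ℂ)
      = ((k.factorial : ℝ) * m.factorial / (k + m + 1).factorial : ℝ) := by
    rw [← hbeta]
    push_cast
    rw [← hprod]
    field_simp
  rw [h1, Complex.ofReal_inj.1 this]


noncomputable def nu : Measure ℝ := volume.restrict (Icc (0:ℝ) 1)

instance : IsProbabilityMeasure nu :=
  ⟨by rw [nu, Measure.restrict_apply_univ, Real.volume_Icc]; norm_num⟩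

lemma nu_Iic (a : ℝ) : nu (Iic a) = ENNReal.ofReal (min a 1) := by
  rw [nu, Measure.restrict_apply measurableSet_Iic]
  have : Iic a ∩ Icc 0 1 = Icc 0 (min a 1) := by
    ext x
    simp only [mem_inter_iff, mem_Iic, mem_Icc, le_min_iff]
    constructor
    · rintro ⟨h1, h2, h3⟩; exact ⟨h2, h1, h3⟩
    · rintro ⟨h1, h2, h3⟩; exact ⟨h2, h1, h3⟩
  rw [this, Real.volume_Icc, sub_zero]

lemma nu_Iio {t : ℝ} (ht : t ≤ 1) : nu (Iio t) = ENNReal.ofReal t := by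
  rw [nu, Measure.restrict_apply measurableSet_Iio]
  have : Iio t ∩ Icc 0 1 = Ico 0 t := by
    ext x
    simp only [mem_inter_iff, mem_Iio, mem_Icc, mem_Ico]
    constructor
    · rintro ⟨h1, h2, h3⟩; exact ⟨h2, h1⟩
    · rintro ⟨h1, h2⟩; exact ⟨h2, h1, by linarith⟩
  rw [this, Real.volume_Ico, sub_zero]

lemma nu_Ici {t : ℝ} (ht : 0 ≤ t) : nu (Ici t) = ENNReal.ofReal (1 - t) := by
  rw [nu, Measure.restrict_apply measurableSet_Ici]
  have : Ici t ∩ Icc 0 1 = Icc t 1 := by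
    ext x
    simp only [mem_inter_iff, mem_Ici, mem_Icc]
    constructor
    · rintro ⟨h1, h2, h3⟩; exact ⟨h1, h3⟩
    · rintro ⟨h1, h2⟩; exact ⟨h1, by linarith, h2⟩
  rw [this, Real.volume_Icc]


lemma binom_count (n k : ℕ) (t : ℝ) :
    (Measure.pi fun _ : Fin n => nu)
      {v : Fin n → ℝ | (Finset.univ.filter fun i => v i < t).card = k}
      = (n.choose k) * nu (Iio t) ^ k * nu (Ici t) ^ (n - k) := by
  classical
  have hset : {v : Fin n → ℝ | (Finset.univ.filter fun i => v i < t).card = k}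
      = ⋃ s ∈ Finset.powersetCard k (Finset.univ : Finset (Fin n)),
          {v : Fin n → ℝ | Finset.univ.filter (fun i => v i < t) = s} := by
    ext v
    simp only [mem_setOf_eq, mem_iUnion, Finset.mem_powersetCard_univ, exists_prop]
    constructor
    · intro h; exact ⟨_, h, rfl⟩
    · rintro ⟨s, hs, rfl⟩; exact hs
  have hA : ∀ s : Finset (Fin n),
      {v : Fin n → ℝ | Finset.univ.filter (fun i => v i < t) = s}
        = Set.pi Set.univ (fun i => if i ∈ s then Iio t else Ici t) := by
    intro s
    ext v
    simp only [mem_setOf_eq, mem_pi, mem_univ, forall_true_left, Finset.ext_iff,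
      Finset.mem_filter, Finset.mem_univ, true_and]
    refine forall_congr' fun i => ?_
    by_cases hi : i ∈ s <;> simp [hi, mem_Iio, mem_Ici, not_lt, le_of_not_gt]
  rw [hset, measure_biUnion_finset]
  · have : ∀ s ∈ Finset.powersetCard k (Finset.univ : Finset (Fin n)),
        (Measure.pi fun _ : Fin n => nu)
          {v : Fin n → ℝ | Finset.univ.filter (fun i => v i < t) = s}
        = nu (Iio t) ^ k * nu (Ici t) ^ (n - k) := by
      intro s hs
      rw [Finset.mem_powersetCard_univ] at hs
      rw [hA s, Measure.pi_pi]
      have : ∀ i : Fin n, nu (if i ∈ s then Iio t else Ici t)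
          = if i ∈ s then nu (Iio t) else nu (Ici t) := fun i => apply_ite nu _ _ _
      simp_rw [this]
      rw [Finset.prod_ite, Finset.prod_const, Finset.prod_const]
      congr 1
      · congr 1
        rw [← hs]
        congr 1
        ext i; simp
      · congr 1
        have : (Finset.univ.filter fun i : Fin n => ¬ i ∈ s) = sᶜ := by
          ext i; simp
        rw [this, Finset.card_compl, hs, Fintype.card_fin]
    rw [Finset.sum_congr rfl this, Finset.sum_const, Finset.card_powersetCard,
      Finset.card_univ, Fintype.card_fin, nsmul_eq_mul, mul_assoc]
  · intro s hs s' hs' hss'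
    simp only [Function.onFun]
    rw [Set.disjoint_left]
    rintro v hv hv'
    exact hss' (hv.symm.trans hv')
  · intro s hs
    rw [hA s]
    exact MeasurableSet.univ_pi fun i => by
      by_cases hi : i ∈ s <;> simp [hi, measurableSet_Iio, measurableSet_Ici]

lemma count_uniform (n k : ℕ) (hk : k ≤ n) :
    (Measure.pi fun _ : Fin (n+1) => nu)
      {w : Fin (n+1) → ℝ |
        (Finset.univ.filter fun i : Fin n => w i.castSucc < w (Fin.last n)).card = k}
      = ENNReal.ofReal ((n + 1 : ℝ)⁻¹) := by
  classical
  set B : Set (ℝ × (Fin n → ℝ)) :=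
    {p | (Finset.univ.filter fun i => p.2 i < p.1).card = k} with hBdef
  have hcast : ∀ p : ℝ × (Fin n → ℝ),
      ((Finset.univ.filter fun i => p.2 i < p.1).card : ℝ)
        = ∑ i : Fin n, if p.2 i < p.1 then (1:ℝ) else 0 := by
    intro p
    rw [Finset.card_filter]
    push_cast [apply_ite (Nat.cast : ℕ → ℝ)]
    rfl
  have hmeasB : MeasurableSet B := by
    have hf : Measurable fun p : ℝ × (Fin n → ℝ) =>
        ∑ i : Fin n, if p.2 i < p.1 then (1:ℝ) else 0 :=
      Finset.measurable_sum _ fun i _ => Measurable.ite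
        (measurableSet_lt (by fun_prop) (by fun_prop))
        measurable_const measurable_const
    have : B = (fun p : ℝ × (Fin n → ℝ) =>
        ∑ i : Fin n, if p.2 i < p.1 then (1:ℝ) else 0) ⁻¹' {(k:ℝ)} := by
      ext p
      simp only [hBdef, mem_setOf_eq, mem_preimage, mem_singleton_iff, ← hcast p,
        Nat.cast_inj]
    rw [this]
    exact hf (measurableSet_singleton _)
  have hmp := measurePreserving_piFinSuccAbove (fun _ : Fin (n+1) => nu) (Fin.last n)
  have hpre : {w : Fin (n+1) → ℝ |
        (Finset.univ.filter fun i : Fin n => w i.castSucc < w (Fin.last n)).card = k}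
      = (MeasurableEquiv.piFinSuccAbove (fun _ => ℝ) (Fin.last n)) ⁻¹' B := by
    ext w
    simp only [mem_preimage, hBdef, mem_setOf_eq, MeasurableEquiv.piFinSuccAbove_apply,
      Fin.insertNthEquiv, Equiv.coe_fn_symm_mk, Fin.removeNth, Fin.succAbove_last]
  rw [hpre, hmp.measure_preimage hmeasB.nullMeasurableSet]
  rw [Measure.prod_apply hmeasB]
  have hstep : (∫⁻ t, (Measure.pi fun _ : Fin n => nu) (Prod.mk t ⁻¹' B) ∂nu)
      = ∫⁻ t in Icc (0:ℝ) 1,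
          ENNReal.ofReal ((n.choose k : ℝ) * (t ^ k * (1 - t) ^ (n - k))) := by
    have hres : (∫⁻ t, (Measure.pi fun _ : Fin n => nu) (Prod.mk t ⁻¹' B) ∂nu)
        = ∫⁻ t in Icc (0:ℝ) 1, (Measure.pi fun _ : Fin n => nu) (Prod.mk t ⁻¹' B) := rfl
    rw [hres]
    refine setLIntegral_congr_fun measurableSet_Icc
      (fun t ht => ?_)
    have hfiber : (Prod.mk t ⁻¹' B)
        = {v : Fin n → ℝ | (Finset.univ.filter fun i => v i < t).card = k} := rfl
    have h1t : (0:ℝ) ≤ 1 - t := by linarith [ht.2]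
    rw [hfiber, binom_count n k, nu_Iio ht.2, nu_Ici ht.1,
      ENNReal.ofReal_mul (Nat.cast_nonneg _), ENNReal.ofReal_mul (pow_nonneg ht.1 k),
      ENNReal.ofReal_pow ht.1, ENNReal.ofReal_pow h1t, ENNReal.ofReal_natCast,
      mul_assoc]
  rw [hstep]
  rw [← ofReal_integral_eq_lintegral_ofReal]
  · rw [MeasureTheory.integral_const_mul, beta_real k (n - k)]
    congr 1
    have hn : k + (n - k) + 1 = n + 1 := by omega
    rw [hn]
    have hcc : ((n.choose k : ℝ)) * ((k.factorial : ℝ) * ((n-k).factorial : ℝ))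
        = (n.factorial : ℝ) := by
      exact_mod_cast congrArg (Nat.cast (R := ℝ))
        (by rw [← Nat.choose_mul_factorial_mul_factorial hk]; ring)
    rw [Nat.factorial_succ]
    have h1 : (n.factorial : ℝ) ≠ 0 := by exact_mod_cast Nat.factorial_ne_zero n
    have h2 : ((n:ℝ) + 1) ≠ 0 := by positivity
    push_cast
    field_simp
    nlinarith [hcc]
  · exact Integrable.const_mul (Continuous.integrableOn_Icc (f := fun t : ℝ => t ^ k * (1 - t) ^ (n - k)) (by fun_prop)) _
  · filter_upwards [ae_restrict_mem measurableSet_Icc] with t ht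
    have h1 := ht.1
    have h2 : (0:ℝ) ≤ 1 - t := by linarith [ht.2]
    positivity


lemma iIndepFun_precomp {Ω ι κ : Type*} [MeasurableSpace Ω] {μ : Measure Ω}
    {f : ι → Ω → ℝ} (g : κ → ι) (hg : Function.Injective g)
    (h : ProbabilityTheory.iIndepFun f μ) :
    ProbabilityTheory.iIndepFun (fun k => f (g k)) μ := by
  classical
  rw [ProbabilityTheory.iIndepFun_iff_measure_inter_preimage_eq_mul] at h ⊢
  intro s sets hsets
  set e : κ ↪ ι := ⟨g, hg⟩ with he
  set sets' : ι → Set ℝ := fun j => ⋂ k ∈ s.filter (fun k => g k = j), sets k with hsets'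
  have hkey : ∀ k ∈ s, sets' (g k) = sets k := by
    intro k hk
    have : s.filter (fun k' => g k' = g k) = {k} := by
      ext k'
      simp only [Finset.mem_filter, Finset.mem_singleton]
      constructor
      · rintro ⟨_, hgk⟩; exact hg hgk
      · rintro rfl; exact ⟨hk, rfl⟩
    simp only [hsets']
    rw [this]
    simp
  have hmeas' : ∀ j ∈ s.map e, MeasurableSet (sets' j) := by
    intro j hj
    refine MeasurableSet.biInter (Finset.countable_toSet _) fun k hk => ?_
    exact hsets k (Finset.mem_filter.1 hk).1
  have := h (s.map e) hmeas'
  have hInter : (⋂ i ∈ s.map e, f i ⁻¹' sets' i) = ⋂ k ∈ s, f (g k) ⁻¹' sets k := by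
    ext ω
    simp only [mem_iInter, Finset.mem_map, mem_preimage]
    constructor
    · intro H k hk
      have := H (g k) ⟨k, hk, rfl⟩
      rwa [hkey k hk] at this
    · rintro H j ⟨k, hk, rfl⟩
      show ω ∈ f (e k) ⁻¹' sets' (e k)
      rw [show e k = g k from rfl, hkey k hk]
      exact H k hk
  have hProd : (∏ i ∈ s.map e, μ (f i ⁻¹' sets' i)) = ∏ k ∈ s, μ (f (g k) ⁻¹' sets k) := by
    rw [Finset.prod_map]
    exact Finset.prod_congr rfl fun k hk => by
      rw [show e k = g k from rfl, hkey k hk]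
  rw [hInter, hProd] at this
  exact this

lemma map_pi {ι : Type*} [Fintype ι] {Ω : Type*} [MeasurableSpace Ω] (μ : Measure Ω)
    [IsProbabilityMeasure μ] (f : ι → Ω → ℝ) (hm : ∀ i, Measurable (f i))
    (h : ProbabilityTheory.iIndepFun f μ)
    (ν : Measure ℝ) [SigmaFinite ν] (hν : ∀ i, Measure.map (f i) μ = ν) :
    Measure.map (fun ω i => f i ω) μ = Measure.pi (fun _ => ν) := by
  refine Eq.symm (Measure.pi_eq fun s hs => ?_)
  rw [Measure.map_apply (measurable_pi_lambda _ hm) (MeasurableSet.univ_pi hs)]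
  have hpre : (fun ω i => f i ω) ⁻¹' Set.pi Set.univ s = ⋂ i ∈ Finset.univ, f i ⁻¹' s i := by
    ext ω; simp [Set.mem_pi]
  rw [hpre, h.measure_inter_preimage_eq_mul Finset.univ (fun i _ => hs i)]
  exact Finset.prod_congr rfl fun i _ => by
    rw [← hν i, Measure.map_apply (hm i) (hs i)]
lemma ofReal_min_clamp (a : ℝ) :
    ENNReal.ofReal (min a 1) = ENNReal.ofReal (min (max a 0) 1) := by
  rcases le_total a 0 with h | h
  · rw [min_eq_left (h.trans zero_le_one), max_eq_right h]
    simp [ENNReal.ofReal_eq_zero.2 h]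
  · rw [max_eq_left h]

/-- If `T₁,...,T_n, T', U` are i.i.d. Uniform[0,1], then
`q = (Σ_i 1{T_i < T'} + U)/(n+1)` is uniformly distributed on `[0,1]`. -/
theorem stmt_11 {Ω : Type*} [MeasurableSpace Ω] (μ : Measure Ω) [IsProbabilityMeasure μ]
    (n : ℕ) (X : Fin (n + 2) → Ω → ℝ) (hmeas : ∀ i, Measurable (X i))
    (hindep : ProbabilityTheory.iIndepFun X μ)
    (hunif : ∀ i, Measure.map (X i) μ = volume.restrict (Set.Icc (0:ℝ) 1)) :
    Measure.map (fun ω =>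
      (((Finset.univ.filter (fun i : Fin n =>
          X (Fin.castLE (by omega) i) ω < X ⟨n, by omega⟩ ω)).card : ℝ) +
        X ⟨n + 1, by omega⟩ ω) / (n + 1)) μ =
      volume.restrict (Set.Icc (0:ℝ) 1) := by
  classical
  set c : (Fin (n+1) → ℝ) → ℕ :=
    fun w => (Finset.univ.filter fun i : Fin n => w i.castSucc < w (Fin.last n)).card with hc
  set h : (Fin (n+1) → ℝ) × ℝ → ℝ := fun p => ((c p.1 : ℝ) + p.2) / (n + 1) with hh
  set W : Ω → Fin (n+1) → ℝ := fun ω i => X (Fin.castLE (by omega) i) ω with hWdef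
  set U : Ω → ℝ := X ⟨n+1, by omega⟩ with hUdef
  -- measurability facts
  have hmeascR : Measurable fun w : Fin (n+1) → ℝ => (c w : ℝ) := by
    have hcast : ∀ w : Fin (n+1) → ℝ,
        ((c w : ℝ)) = ∑ i : Fin n, if w i.castSucc < w (Fin.last n) then (1:ℝ) else 0 := by
      intro w
      simp only [hc]
      rw [Finset.card_filter]
      push_cast [apply_ite (Nat.cast : ℕ → ℝ)]
      rfl
    rw [funext hcast]
    exact Finset.measurable_sum _ fun i _ => Measurable.ite
      (measurableSet_lt (measurable_pi_apply _) (measurable_pi_apply _))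
      measurable_const measurable_const
  have hmeash : Measurable h :=
    ((hmeascR.comp measurable_fst).add measurable_snd).div_const _
  have hmeasW : Measurable W := measurable_pi_lambda _ fun i => hmeas _
  -- independence of W and U
  have hWU : ProbabilityTheory.IndepFun W U μ := by
    set S : Finset (Fin (n+2)) := Finset.univ.filter (fun j => (j:ℕ) < n+1) with hS
    set T : Finset (Fin (n+2)) := {⟨n+1, by omega⟩} with hT
    have hST : Disjoint S T := by
      rw [Finset.disjoint_right]
      intro j hj
      rw [hT, Finset.mem_singleton] at hj
      rw [hS, Finset.mem_filter]
      rintro ⟨-, hlt⟩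
      rw [hj] at hlt
      simp at hlt
    have base := hindep.indepFun_finset S T hST hmeas
    have hg1 : Measurable fun v : ∀ _ : S, ℝ =>
        (fun j : Fin (n+1) => v ⟨Fin.castLE (by omega) j,
          by rw [hS, Finset.mem_filter]; exact ⟨Finset.mem_univ _, j.isLt⟩⟩) :=
      measurable_pi_lambda _ fun j => measurable_pi_apply _
    have hg2 : Measurable fun v : ∀ _ : T, ℝ =>
        v ⟨⟨n+1, by omega⟩, by rw [hT]; exact Finset.mem_singleton_self _⟩ :=
      measurable_pi_apply _
    exact base.comp hg1 hg2
  -- the distribution of (W, U)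
  have hmapW : Measure.map W μ = Measure.pi (fun _ : Fin (n+1) => nu) := by
    refine map_pi μ (fun i : Fin (n+1) => X (Fin.castLE (by omega) i))
      (fun i => hmeas _) ?_ nu (fun i => hunif _)
    exact iIndepFun_precomp _ (Fin.castLE_injective _) hindep
  have hmapU : Measure.map U μ = nu := hunif _
  have hmapWU : Measure.map (fun ω => (W ω, U ω)) μ
      = (Measure.pi fun _ : Fin (n+1) => nu).prod nu := by
    rw [← hmapW, ← hmapU]
    exact (ProbabilityTheory.indepFun_iff_map_prod_eq_prod_map_map
      hmeasW.aemeasurable (hmeas _).aemeasurable).1 hWU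
  -- rewrite the target function
  have hfe : (fun ω =>
      (((Finset.univ.filter (fun i : Fin n =>
          X (Fin.castLE (by omega) i) ω < X ⟨n, by omega⟩ ω)).card : ℝ) +
        X ⟨n + 1, by omega⟩ ω) / (n + 1)) = h ∘ (fun ω => (W ω, U ω)) := rfl
  rw [hfe, ← Measure.map_map hmeash (hmeasW.prodMk (hmeas _)), hmapWU]
  -- now a statement about the product measure
  set ρ : Measure ((Fin (n+1) → ℝ) × ℝ) := (Measure.pi fun _ : Fin (n+1) => nu).prod nu
    with hρ
  haveI : IsProbabilityMeasure (Measure.map h ρ) :=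
    Measure.isProbabilityMeasure_map hmeash.aemeasurable
  refine Measure.ext_of_Iic _ _ fun x => ?_
  rw [Measure.map_apply hmeash measurableSet_Iic]
  have hpos : (0:ℝ) < (n:ℝ) + 1 := by positivity
  have hsets : h ⁻¹' Iic x = ⋃ k ∈ Finset.range (n+1),
      ({w : Fin (n+1) → ℝ | c w = k} ×ˢ Iic (((n:ℝ)+1) * x - k)) := by
    ext p
    simp only [mem_preimage, mem_Iic, mem_iUnion, Finset.mem_range, mem_prod,
      mem_setOf_eq, exists_prop]
    rw [hh]
    constructor
    · intro hp
      refine ⟨c p.1, Nat.lt_succ_of_le ?_, rfl, ?_⟩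
      · exact (Finset.card_filter_le _ _).trans (by simp)
      · rw [div_le_iff₀ hpos] at hp
        linarith [hp]
    · rintro ⟨k, hkn, hk, hp2⟩
      rw [div_le_iff₀ hpos, hk]
      linarith [hp2]
  rw [hsets, measure_biUnion_finset]
  · have hterm : ∀ k ∈ Finset.range (n+1),
        ρ ({w : Fin (n+1) → ℝ | c w = k} ×ˢ Iic (((n:ℝ)+1) * x - k))
        = ENNReal.ofReal (((n:ℝ)+1)⁻¹ * min (max (((n:ℝ)+1) * x - k) 0) 1) := by
      intro k hk
      rw [Finset.mem_range] at hk
      rw [hρ, Measure.prod_prod, count_uniform n k (by omega), nu_Iic,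
        ofReal_min_clamp, ← ENNReal.ofReal_mul (by positivity)]
    rw [Finset.sum_congr rfl hterm, ← ENNReal.ofReal_sum_of_nonneg (fun k _ => by positivity)]
    have hsum : ∑ k ∈ Finset.range (n+1),
        ((n:ℝ)+1)⁻¹ * min (max (((n:ℝ)+1) * x - k) 0) 1
        = ((n:ℝ)+1)⁻¹ * min (max (((n:ℝ)+1) * x) 0) ((n:ℝ)+1) := by
      rw [← Finset.mul_sum, clamp_sum (n+1) (((n:ℝ)+1)*x)]
      push_cast
      ring_nf
    rw [hsum]
    have hRHS : volume.restrict (Icc (0:ℝ) 1) (Iic x) = ENNReal.ofReal (min x 1) := nu_Iic x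
    rw [hRHS, ofReal_min_clamp]
    congr 1
    rcases le_total x 0 with h0 | h0
    · rw [max_eq_right h0, max_eq_right (by nlinarith : ((n:ℝ)+1) * x ≤ 0)]
      rw [min_eq_left hpos.le, min_eq_left (by positivity : (0:ℝ) ≤ 1)]
      ring
    · rw [max_eq_left h0, max_eq_left (by positivity : (0:ℝ) ≤ ((n:ℝ)+1) * x)]
      rcases le_total x 1 with h1 | h1
      · rw [min_eq_left h1, min_eq_left (by nlinarith : ((n:ℝ)+1) * x ≤ (n:ℝ)+1)]
        field_simp
      · rw [min_eq_right h1, min_eq_right (by nlinarith : (n:ℝ)+1 ≤ ((n:ℝ)+1) * x)]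
        field_simp
  · intro k hk l hl hkl
    simp only [Function.onFun]
    rw [Set.disjoint_left]
    rintro ⟨w, u⟩ ⟨hw, -⟩ ⟨hw', -⟩
    exact hkl (hw.symm.trans hw')
  · intro k hk
    refine MeasurableSet.prod ?_ measurableSet_Iic
    have : {w : Fin (n+1) → ℝ | c w = k} = (fun w => (c w : ℝ)) ⁻¹' {(k:ℝ)} := by
      ext w; simp [Nat.cast_inj]
    rw [this]
    exact hmeascR (measurableSet_singleton _)
end
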